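/- arXiv:1809.10984 — 3 statements merged into one kernel-verified Lean document; each statement's English description precedes it below -/
import Mathlib

section
/- Let P and Q be p-subgroups of the finite group G and let g ∈ G normalize both P and Q (so that P, Q ∈ S_p(G)^⟨g⟩). If the Möbius function value μ_g(P,Q) of the poset S_p(G)^⟨g⟩ is nonzero, then Φ(Q) ≤ P ≤ Q. Equivalently: if P < Q and Φ(Q) is not contained in P, then the alternating sum Σ_c (-1)^{|c|}, taken over all chains c (including the empty chain) of the open interval {R : P < R < Q, R a p-subgroup of G, g ∈ N_G(R)}, is equal to 0. -/
open scoped Classical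

noncomputable instance subgroupFintype {G : Type*} [Group G] [Finite G] :
    Fintype (Subgroup G) :=
  haveI : Finite (Subgroup G) :=
    Finite.of_injective (fun H : Subgroup G => (H : Set G)) SetLike.coe_injective
  Fintype.ofFinite _

/-- Sum of `(-1)^|c|` over all chains `c` (including the empty chain) of the
poset of subgroups in `S`, ordered by inclusion. -/
noncomputable def chainSum {G : Type*} [Group G] [Finite G] (S : Set (Subgroup G)) : ℤ :=
  ∑ c ∈ Finset.univ.filter
      (fun c : Finset (Subgroup G) => ↑c ⊆ S ∧ IsChain (· ≤ ·) (↑c : Set (Subgroup G))),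
    (-1 : ℤ) ^ c.card

/-- Reduced Euler characteristic `χ̃(S) = Σ_c (-1)^(|c|-1)` over all chains incl. empty. -/
noncomputable def reducedEuler {G : Type*} [Group G] [Finite G] (S : Set (Subgroup G)) : ℤ :=
  - chainSum S

/-- Frattini subgroup of `Q`, regarded as a subgroup of `G`. -/
def frattiniIn {G : Type*} [Group G] (Q : Subgroup G) : Subgroup G :=
  (frattini ↥Q).map Q.subtype

/-- Möbius function of the poset `S_p(G)^⟨g⟩`. -/
noncomputable def mobiusG {G : Type*} [Group G] [Finite G] (p : ℕ) (g : G)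
    (P Q : Subgroup G) : ℤ :=
  if P = Q then 1
  else if P < Q then
    reducedEuler {R : Subgroup G | IsPGroup p R ∧ g ∈ Subgroup.normalizer (R : Set G) ∧ P < R ∧ R < Q}
  else 0

/-!
If `Φ(Q) ≰ P`, then `x₀ = P ⊔ Φ(Q)` lies in the open interval `(P, Q)_g`, and so does `R ⊔ x₀ =
R ⊔ Φ(Q)` for every `R` in it: it is `g`-stable because `Φ(Q)` is characteristic in `Q`, and it is
still proper in `Q` because `Φ(Q)` consists of non-generators. Such a cone point makes the
alternating chain sum vanish: adding or removing `coneApex x₀ c`, the join of `x₀` with the largest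
member of `c` not above `x₀`, is a sign-reversing involution on the chains of the interval.
-/

section ConeChains

variable {α : Type*} [SemilatticeSup α]

lemma IsChain.sup_mem {s : Set α} (hs : IsChain (· ≤ ·) s) {x y : α} (hx : x ∈ s) (hy : y ∈ s) :
    x ⊔ y ∈ s := by
  rcases hs.total hx hy with h | h
  · rwa [sup_eq_right.2 h]
  · rwa [sup_eq_left.2 h]

variable [OrderBot α]

noncomputable def coneApex (x₀ : α) (c : Finset α) : α :=
  (c.filter (¬ x₀ ≤ ·)).sup id ⊔ x₀

lemma le_coneApex (x₀ : α) (c : Finset α) : x₀ ≤ coneApex x₀ c := le_sup_right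

lemma coneApex_insert_of_le {x₀ z : α} (c : Finset α) (hz : x₀ ≤ z) :
    coneApex x₀ (insert z c) = coneApex x₀ c := by
  rw [coneApex, Finset.filter_insert, if_neg (not_not.2 hz), coneApex]

lemma coneApex_erase_of_le {x₀ z : α} (c : Finset α) (hz : x₀ ≤ z) :
    coneApex x₀ (c.erase z) = coneApex x₀ c := by
  have hz' : z ∉ c.filter (¬ x₀ ≤ ·) := fun h => (Finset.mem_filter.1 h).2 hz
  rw [coneApex, Finset.filter_erase, Finset.erase_eq_of_notMem hz', coneApex]

lemma IsChain.le_coneApex_or {c : Finset α} (hc : IsChain (· ≤ ·) (c : Set α)) (x₀ : α)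
    {y : α} (hy : y ∈ c) : y ≤ coneApex x₀ c ∨ coneApex x₀ c ≤ y := by
  by_cases hxy : x₀ ≤ y
  · refine .inr (sup_le (Finset.sup_le fun l hl => ?_) hxy)
    rw [Finset.mem_filter] at hl
    exact (hc.total hl.1 hy).resolve_right fun hyl => hl.2 (hxy.trans hyl)
  · exact .inl (le_sup_of_le_left (Finset.le_sup (f := id) (Finset.mem_filter.2 ⟨hy, hxy⟩)))

lemma IsChain.coneApex_mem {S : Set α} {x₀ : α} (hx₀ : x₀ ∈ S) (hcl : ∀ y ∈ S, y ⊔ x₀ ∈ S)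
    {c : Finset α} (hc : IsChain (· ≤ ·) (c : Set α)) (hcS : (c : Set α) ⊆ S) :
    coneApex x₀ c ∈ S := by
  have hchain : IsChain (· ≤ ·) (insert ⊥ (c : Set α)) :=
    hc.insert fun _ _ _ => .inl bot_le
  have hsup : (c.filter (¬ x₀ ≤ ·)).sup id ∈ insert ⊥ (c : Set α) :=
    Finset.sup_induction (Set.mem_insert _ _) (fun _ ha _ hb => hchain.sup_mem ha hb)
      fun y hy => Set.mem_insert_of_mem _ (Finset.mem_filter.1 hy).1
  rcases hsup with hbot | hmem
  · rw [coneApex, hbot, bot_sup_eq]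
    exact hx₀
  · exact hcl _ (hcS hmem)

theorem sum_chains_eq_zero_of_cone [Fintype α] {S : Set α} {x₀ : α} (hx₀ : x₀ ∈ S)
    (hcl : ∀ y ∈ S, y ⊔ x₀ ∈ S) :
    ∑ c ∈ Finset.univ.filter
        (fun c : Finset α => ↑c ⊆ S ∧ IsChain (· ≤ ·) (↑c : Set α)), (-1 : ℤ) ^ c.card = 0 := by
  let toggle (c : Finset α) : Finset α :=
    if coneApex x₀ c ∈ c then c.erase (coneApex x₀ c) else insert (coneApex x₀ c) c
  refine Finset.sum_involution (fun c _ => toggle c) ?_ ?_ ?_ ?_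
  · intro c _
    unfold toggle
    split_ifs with h
    · rw [← Finset.card_erase_add_one h, pow_succ]
      ring
    · rw [Finset.card_insert_of_notMem h, pow_succ]
      ring
  · intro c _ _
    unfold toggle
    split_ifs with h
    · exact fun he => Finset.erase_eq_self.1 he h
    · exact Finset.insert_ne_self.2 h
  · intro c hc
    obtain ⟨hcS, hch⟩ := (Finset.mem_filter.1 hc).2
    simp only [Finset.mem_filter, Finset.mem_univ, true_and]
    unfold toggle
    split_ifs
    · have hsub : ((c.erase (coneApex x₀ c) : Finset α) : Set α) ⊆ c :=
        Finset.coe_subset.2 (Finset.erase_subset _ _)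
      exact ⟨hsub.trans hcS, hch.mono hsub⟩
    · rw [Finset.coe_insert]
      refine ⟨Set.insert_subset (hch.coneApex_mem hx₀ hcl hcS) hcS,
        hch.insert fun y hy _ => (hch.le_coneApex_or x₀ hy).symm⟩
  · intro c _
    show toggle (toggle c) = c
    unfold toggle
    by_cases h : coneApex x₀ c ∈ c
    · simp only [h, if_true]
      rw [coneApex_erase_of_le c (le_coneApex x₀ c), if_neg (Finset.notMem_erase _ c),
        Finset.insert_erase h]
    · simp only [h, if_false]
      rw [coneApex_insert_of_le c (le_coneApex x₀ c), if_pos (Finset.mem_insert_self _ c),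
        Finset.erase_insert h]

end ConeChains

section Frattini

variable {G : Type*} [Group G]

lemma mem_normalizer_map_subtype_of_characteristic {Q : Subgroup G} {K : Subgroup Q}
    [hK : K.Characteristic] {g : G} (hg : g ∈ Subgroup.normalizer (Q : Set G)) :
    g ∈ Subgroup.normalizer ((K.map Q.subtype : Subgroup G) : Set G) := by
  rw [Subgroup.mem_normalizer_iff_map_conj_eq] at hg ⊢
  let e : Q ≃* Q := ((MulAut.conj g).subgroupMap Q).trans (MulEquiv.subgroupCongr hg)
  have hcomm : ((MulAut.conj g : G ≃* G) : G →* G).comp Q.subtype = Q.subtype.comp e.toMonoidHom :=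
    rfl
  rw [Subgroup.map_map, hcomm, ← Subgroup.map_map,
    Subgroup.characteristic_iff_map_eq.1 hK e]

lemma frattiniIn_le (Q : Subgroup G) : frattiniIn Q ≤ Q :=
  Subgroup.map_subtype_le _

lemma mem_normalizer_frattiniIn {Q : Subgroup G} {g : G}
    (hg : g ∈ Subgroup.normalizer (Q : Set G)) :
    g ∈ Subgroup.normalizer ((frattiniIn Q : Subgroup G) : Set G) :=
  mem_normalizer_map_subtype_of_characteristic hg

lemma sup_frattiniIn_lt [Finite G] {K Q : Subgroup G} (hKQ : K < Q) : K ⊔ frattiniIn Q < Q := by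
  refine lt_of_le_of_ne (sup_le hKQ.le (frattiniIn_le Q)) fun heq => hKQ.ne ?_
  have htop : (K ⊔ frattiniIn Q).subgroupOf Q = ⊤ := by
    rw [heq, Subgroup.subgroupOf_self]
  rw [Subgroup.subgroupOf_sup hKQ.le (frattiniIn_le Q), ← Subgroup.comap_subtype (frattiniIn Q),
    frattiniIn, Subgroup.comap_map_eq_self_of_injective Q.subtype_injective] at htop
  exact le_antisymm hKQ.le (Subgroup.subgroupOf_eq_top.1 (frattini_nongenerating htop))

lemma sup_frattiniIn_mem_of_lt [Finite G] {p : ℕ} {g : G} {R Q : Subgroup G} (hQ : IsPGroup p Q)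
    (hgR : g ∈ Subgroup.normalizer (R : Set G)) (hgQ : g ∈ Subgroup.normalizer (Q : Set G))
    (hRQ : R < Q) :
    IsPGroup p (R ⊔ frattiniIn Q : Subgroup G) ∧
      g ∈ Subgroup.normalizer ((R ⊔ frattiniIn Q : Subgroup G) : Set G) ∧ R ⊔ frattiniIn Q < Q :=
  ⟨hQ.to_le (sup_frattiniIn_lt hRQ).le,
    Subgroup.normalizer_inf_normalizer_le_normalizer_sup _ _ ⟨hgR, mem_normalizer_frattiniIn hgQ⟩,
    sup_frattiniIn_lt hRQ⟩

end Frattini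

theorem stmt0_general {G : Type*} [Group G] [Finite G] (p : ℕ)
    (P Q : Subgroup G) (hQ : IsPGroup p Q)
    (g : G) (hgP : g ∈ Subgroup.normalizer (P : Set G)) (hgQ : g ∈ Subgroup.normalizer (Q : Set G))
    (hne : mobiusG p g P Q ≠ 0) :
    frattiniIn Q ≤ P ∧ P ≤ Q := by
  by_cases hPQ : P = Q
  · subst hPQ
    exact ⟨frattiniIn_le P, le_rfl⟩
  have hlt : P < Q := by
    by_contra hlt
    exact hne (by rw [mobiusG, if_neg hPQ, if_neg hlt])
  refine ⟨?_, hlt.le⟩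
  by_contra hΦ
  apply hne
  rw [mobiusG, if_neg hPQ, if_pos hlt, reducedEuler, chainSum, neg_eq_zero]
  obtain ⟨hp₀, hg₀, hlt₀⟩ := sup_frattiniIn_mem_of_lt hQ hgP hgQ hlt
  refine sum_chains_eq_zero_of_cone ⟨hp₀, hg₀, left_lt_sup.2 hΦ, hlt₀⟩ ?_
  rintro R ⟨-, hgR, hPR, hRQ⟩
  rw [← sup_assoc, sup_eq_left.2 hPR.le]
  obtain ⟨hp, hg, hlt'⟩ := sup_frattiniIn_mem_of_lt hQ hgR hgQ hRQ
  exact ⟨hp, hg, hPR.trans_le le_sup_left, hlt'⟩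

theorem stmt0 {G : Type*} [Group G] [Finite G] (p : ℕ) [Fact p.Prime]
    (P Q : Subgroup G) (hP : IsPGroup p P) (hQ : IsPGroup p Q)
    (g : G) (hgP : g ∈ Subgroup.normalizer (P : Set G)) (hgQ : g ∈ Subgroup.normalizer (Q : Set G))
    (hne : mobiusG p g P Q ≠ 0) :
    frattiniIn Q ≤ P ∧ P ≤ Q :=
  stmt0_general p P Q hQ g hgP hgQ hne
end

section
/- Let V be a subgroup of the finite group G, let P be a p-subgroup of G with P ≤ V, and let g ∈ V with g ∈ N_G(P). Suppose K is a normal subgroup of V which is a p-group and which is not contained in P (in the paper, K = O_p(V), the largest normal p-subgroup of V). Then the reduced Euler characteristic of the poset (P,V]^⟨g⟩_{S_p} = {Q : Q a p-subgroup of G, P < Q ≤ V, g ∈ N_G(Q)} vanishes; that is, Σ_c (-1)^{|c|} = 0, the sum running over all chains c of this poset, including the empty chain. -/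
open scoped Classical

/-!
Since `V` normalises `K`, the map `Q ↦ Q ⊔ K` is a closure operator on the poset
`S = (P,V]^⟨g⟩`, and `P ⊔ K ∈ S` lies below every `Q ⊔ K`, so `S` is conically contractible.
Combinatorially: for a chain `c` of `S`, let `t c` be the closure of the largest non-closed
member of `c`, or `P ⊔ K` if every member is closed. Then `t c` is comparable with all of `c`,
and adding or removing `t c` does not change the non-closed members, so `c ↦ c ∆ {t c}` is a
sign-reversing involution on the chains of `S`.
-/

namespace Finset

variable {α : Type*}

noncomputable def toggle (x : α) (s : Finset α) : Finset α :=
  if x ∈ s then s.erase x else insert x s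

theorem toggle_toggle (x : α) (s : Finset α) : (s.toggle x).toggle x = s := by
  by_cases h : x ∈ s
  · simp [toggle, h]
  · simp [toggle, h]

theorem toggle_ne (x : α) (s : Finset α) : s.toggle x ≠ s := by
  by_cases h : x ∈ s
  · simp [toggle, h]
  · simp [toggle, h]

theorem neg_one_pow_card_toggle (x : α) (s : Finset α) :
    (-1 : ℤ) ^ (s.toggle x).card = -(-1) ^ s.card := by
  by_cases h : x ∈ s
  · rw [toggle, if_pos h, ← neg_neg ((-1 : ℤ) ^ (s.erase x).card), ← card_erase_add_one h,
      pow_succ, mul_neg_one]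
  · rw [toggle, if_neg h, card_insert_of_notMem h, pow_succ, mul_neg_one]

theorem filter_toggle_of_not (p : α → Prop) [DecidablePred p] {x : α} (hx : ¬ p x)
    (s : Finset α) : (s.toggle x).filter p = s.filter p := by
  by_cases h : x ∈ s
  · rw [toggle, if_pos h, filter_erase, erase_eq_of_notMem (by simp [hx])]
  · rw [toggle, if_neg h, filter_insert, if_neg hx]

theorem coe_toggle_subset (x : α) (s : Finset α) : (s.toggle x : Set α) ⊆ insert x ↑s := by
  by_cases h : x ∈ s
  · simp [toggle, h]
  · simp [toggle, h]

end Finset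

namespace ClosureOperator

variable {α : Type*} [PartialOrder α] {f : ClosureOperator α}

theorem isChain_insert_closure_of_maximal {c : Finset α} (hc : IsChain (· ≤ ·) (c : Set α))
    {x : α} (hx : Maximal (· ∈ c.filter (¬ f.IsClosed ·)) x) :
    IsChain (· ≤ ·) (insert (f x) (c : Set α)) := by
  have hxc : x ∈ c := (Finset.mem_filter.1 hx.1).1
  refine hc.insert fun z hz _ => ?_
  rcases eq_or_ne x z with rfl | hxz
  · exact Or.inr (f.le_closure x)
  rcases hc hxc hz hxz with hxz | hzx
  · by_cases hz_closed : f.IsClosed z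
    · exact Or.inl (f.closure_min hxz hz_closed)
    · exact Or.inr ((hx.2 (Finset.mem_filter.2 ⟨hz, hz_closed⟩) hxz).trans (f.le_closure x))
  · exact Or.inr (hzx.trans (f.le_closure x))

end ClosureOperator

section Chains

variable {α : Type*} [PartialOrder α] [Fintype α]

noncomputable def chains (S : Set α) : Finset (Finset α) :=
  Finset.univ.filter fun c => ↑c ⊆ S ∧ IsChain (· ≤ ·) (c : Set α)

theorem toggle_mem_chains {S : Set α} {c : Finset α} {x : α} (hc : c ∈ chains S) (hx : x ∈ S)
    (hxc : IsChain (· ≤ ·) (insert x (c : Set α))) : c.toggle x ∈ chains S := by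
  have hcS : (c : Set α) ⊆ S := (Finset.mem_filter.1 hc).2.1
  exact Finset.mem_filter.2 ⟨Finset.mem_univ _,
    (Finset.coe_toggle_subset x c).trans (Set.insert_subset hx hcS),
    hxc.mono (Finset.coe_toggle_subset x c)⟩

theorem sum_chains_neg_one_pow_eq_zero_of_toggle {S : Set α} (t : Finset α → α)
    (ht : ∀ c ∈ chains S, t c ∈ S ∧ IsChain (· ≤ ·) (insert (t c) (c : Set α)))
    (ht_toggle : ∀ c ∈ chains S, t (c.toggle (t c)) = t c) :
    ∑ c ∈ chains S, (-1 : ℤ) ^ c.card = 0 :=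
  Finset.sum_involution (fun c _ => c.toggle (t c))
    (fun c _ => by rw [Finset.neg_one_pow_card_toggle, add_neg_cancel])
    (fun c _ _ => Finset.toggle_ne _ c)
    (fun c hc => toggle_mem_chains hc (ht c hc).1 (ht c hc).2)
    (fun c hc => by simp only [ht_toggle c hc, Finset.toggle_toggle])

namespace ClosureOperator

variable {f : ClosureOperator α}

theorem sum_chains_neg_one_pow_eq_zero {S : Set α} (hfS : ∀ x ∈ S, f x ∈ S) {m : α}
    (hm : m ∈ S) (hm_le : ∀ x ∈ S, m ≤ f x) :
    ∑ c ∈ chains S, (-1 : ℤ) ^ c.card = 0 := by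
  choose top htop using fun (s : Finset α) (hs : s.Nonempty) => s.exists_maximal hs
  let nonClosed (c : Finset α) : Finset α := c.filter (¬ f.IsClosed ·)
  let pick (s : Finset α) : α := if hs : s.Nonempty then f (top s hs) else f m
  refine sum_chains_neg_one_pow_eq_zero_of_toggle (fun c => pick (nonClosed c)) ?_ ?_
  · intro c hc
    obtain ⟨hcS, hchain⟩ := (Finset.mem_filter.1 hc).2
    by_cases hs : (nonClosed c).Nonempty
    · have htop_mem := (Finset.mem_filter.1 (htop _ hs).1).1
      simp only [pick, dif_pos hs]
      exact ⟨hfS _ (hcS htop_mem), isChain_insert_closure_of_maximal hchain (htop _ hs)⟩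
    · simp only [pick, dif_neg hs]
      have hclosed : ∀ z ∈ c, f.IsClosed z := fun z hz =>
        not_not.1 fun h => hs ⟨z, Finset.mem_filter.2 ⟨hz, h⟩⟩
      refine ⟨hfS m hm, hchain.insert fun z hz _ => Or.inl (f.closure_min ?_ (hclosed z hz))⟩
      exact (hm_le z (hcS hz)).trans_eq (hclosed z hz).closure_eq
  · intro c _
    have hpick_closed : f.IsClosed (pick (nonClosed c)) := by
      unfold pick
      split <;> exact f.isClosed_closure _
    exact congrArg pick (Finset.filter_toggle_of_not (¬ f.IsClosed ·) (not_not.2 hpick_closed) c)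

end ClosureOperator

end Chains

def ClosureOperator.supRight {α : Type*} [SemilatticeSup α] (a : α) : ClosureOperator α :=
  .mk₂ (· ⊔ a) (fun _ => le_sup_left) fun _ _ h => sup_le h le_sup_right

theorem stmt1_general {G : Type*} [Group G] [Finite G] (p : ℕ)
    (V P K : Subgroup G) (hP : IsPGroup p P) (hPV : P ≤ V)
    (g : G) (hgV : g ∈ V) (hgP : g ∈ Subgroup.normalizer (P : Set G))
    (hKV : K ≤ V) (hKnormal : ∀ v ∈ V, ∀ k ∈ K, v * k * v⁻¹ ∈ K)
    (hK : IsPGroup p K) (hKP : ¬ K ≤ P) :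
    reducedEuler {Q : Subgroup G | IsPGroup p Q ∧ P < Q ∧ Q ≤ V ∧ g ∈ Subgroup.normalizer (Q : Set G)} = 0 := by
  have hVK : V ≤ Subgroup.normalizer K := Subgroup.le_normalizer_iff.2 hKnormal
  have hsup_mem {Q : Subgroup G} (hQp : IsPGroup p Q) (hPQ : P ≤ Q) (hQV : Q ≤ V)
      (hgQ : g ∈ Subgroup.normalizer (Q : Set G)) :
      IsPGroup p ↥(Q ⊔ K) ∧ P < Q ⊔ K ∧ Q ⊔ K ≤ V ∧
        g ∈ Subgroup.normalizer ((Q ⊔ K : Subgroup G) : Set G) :=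
    ⟨hQp.to_sup_of_normal_right' hK (hQV.trans hVK),
      lt_of_le_of_ne (hPQ.trans le_sup_left) fun h => hKP (le_sup_right.trans h.ge),
      sup_le hQV hKV, Subgroup.normalizer_inf_normalizer_le_normalizer_sup Q K ⟨hgQ, hVK hgV⟩⟩
  rw [reducedEuler, neg_eq_zero]
  exact (ClosureOperator.supRight K).sum_chains_neg_one_pow_eq_zero
    (fun Q ⟨hQp, hPQ, hQV, hgQ⟩ => hsup_mem hQp hPQ.le hQV hgQ)
    (hsup_mem hP le_rfl hPV hgP) fun Q hQ => sup_le_sup_right hQ.2.1.le K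

theorem stmt1 {G : Type*} [Group G] [Finite G] (p : ℕ) [Fact p.Prime]
    (V P K : Subgroup G) (hP : IsPGroup p P) (hPV : P ≤ V)
    (g : G) (hgV : g ∈ V) (hgP : g ∈ Subgroup.normalizer (P : Set G))
    (hKV : K ≤ V) (hKnormal : ∀ v ∈ V, ∀ k ∈ K, v * k * v⁻¹ ∈ K)
    (hK : IsPGroup p K) (hKP : ¬ K ≤ P) :
    reducedEuler {Q : Subgroup G | IsPGroup p Q ∧ P < Q ∧ Q ≤ V ∧ g ∈ Subgroup.normalizer (Q : Set G)} = 0 :=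
  stmt1_general p V P K hP hPV g hgV hgP hKV hKnormal hK hKP
end

section
/- Let V be a subgroup of the finite group G, let P be a p-subgroup of G with P ≤ V, and let g ∈ V with g ∈ N_G(P). Suppose K is a normal subgroup of V which is a p-group and which is not contained in P. Then: (1) P ⊔ K is a p-subgroup of G normalized by g with P < P ⊔ K ≤ V, i.e. P ⊔ K lies in the poset (P,V]^⟨g⟩_{S_p} = {Q : Q a p-subgroup of G, P < Q ≤ V, g ∈ N_G(Q)}; (2) for every Q ∈ (P,V]^⟨g⟩_{S_p}, the subgroup Q ⊔ K again lies in (P,V]^⟨g⟩_{S_p}; and (3) for every Q ∈ (P,V]^⟨g⟩_{S_p} one has Q ≤ Q ⊔ K and P ⊔ K ≤ Q ⊔ K. (These data constitute the conical contraction of (P,V]^⟨g⟩_{S_p} used to prove that its reduced Euler characteristic vanishes.) -/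
open Subgroup

theorem Subgroup.le_normalizer_of_conj_mem {G : Type*} [Group G] {V K : Subgroup G}
    (hK : ∀ v ∈ V, ∀ k ∈ K, v * k * v⁻¹ ∈ K) : V ≤ normalizer (K : Set G) := by
  intro v hv
  refine mem_normalizer_iff.mpr fun k => ⟨hK v hv k, fun hk => ?_⟩
  simpa [mul_assoc] using hK v⁻¹ (inv_mem hv) _ hk

theorem stmt4_general {G : Type*} [Group G] (p : ℕ)
    (V P K : Subgroup G) (hP : IsPGroup p P) (hPV : P ≤ V)
    (g : G) (hgV : g ∈ V) (hgP : g ∈ Subgroup.normalizer (P : Set G))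
    (hKV : K ≤ V) (hKnormal : ∀ v ∈ V, ∀ k ∈ K, v * k * v⁻¹ ∈ K)
    (hK : IsPGroup p K) (hKP : ¬ K ≤ P) :
    (IsPGroup p (P ⊔ K : Subgroup G) ∧ g ∈ Subgroup.normalizer ((P ⊔ K : Subgroup G) : Set G) ∧
        P < P ⊔ K ∧ P ⊔ K ≤ V) ∧
    (∀ Q : Subgroup G, IsPGroup p Q → P < Q → Q ≤ V → g ∈ Subgroup.normalizer (Q : Set G) →
      IsPGroup p (Q ⊔ K : Subgroup G) ∧ g ∈ Subgroup.normalizer ((Q ⊔ K : Subgroup G) : Set G) ∧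
        P < Q ⊔ K ∧ Q ⊔ K ≤ V) ∧
    (∀ Q : Subgroup G, IsPGroup p Q → P < Q → Q ≤ V → g ∈ Subgroup.normalizer (Q : Set G) →
      Q ≤ Q ⊔ K ∧ P ⊔ K ≤ Q ⊔ K) := by
  have hVK : V ≤ normalizer (K : Set G) := le_normalizer_of_conj_mem hKnormal
  have sup_K_mem : ∀ Q : Subgroup G, IsPGroup p Q → Q ≤ V → g ∈ normalizer (Q : Set G) →
      IsPGroup p (Q ⊔ K : Subgroup G) ∧ g ∈ normalizer ((Q ⊔ K : Subgroup G) : Set G) ∧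
        Q ⊔ K ≤ V := fun Q hQ hQV hgQ =>
    ⟨hQ.to_sup_of_normal_right' hK (hQV.trans hVK),
      normalizer_inf_normalizer_le_normalizer_sup Q K ⟨hgQ, hVK hgV⟩, sup_le hQV hKV⟩
  obtain ⟨hPK, hgPK, hPKV⟩ := sup_K_mem P hP hPV hgP
  refine ⟨⟨hPK, hgPK, left_lt_sup.mpr hKP, hPKV⟩, fun Q hQ hPQ hQV hgQ => ?_,
    fun Q _ hPQ _ _ => ⟨le_sup_left, sup_le_sup_right hPQ.le K⟩⟩
  obtain ⟨hQK, hgQK, hQKV⟩ := sup_K_mem Q hQ hQV hgQ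
  exact ⟨hQK, hgQK, hPQ.trans_le le_sup_left, hQKV⟩

theorem stmt4 {G : Type*} [Group G] [Finite G] (p : ℕ) [Fact p.Prime]
    (V P K : Subgroup G) (hP : IsPGroup p P) (hPV : P ≤ V)
    (g : G) (hgV : g ∈ V) (hgP : g ∈ Subgroup.normalizer (P : Set G))
    (hKV : K ≤ V) (hKnormal : ∀ v ∈ V, ∀ k ∈ K, v * k * v⁻¹ ∈ K)
    (hK : IsPGroup p K) (hKP : ¬ K ≤ P) :
    (IsPGroup p (P ⊔ K : Subgroup G) ∧ g ∈ Subgroup.normalizer ((P ⊔ K : Subgroup G) : Set G) ∧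
        P < P ⊔ K ∧ P ⊔ K ≤ V) ∧
    (∀ Q : Subgroup G, IsPGroup p Q → P < Q → Q ≤ V → g ∈ Subgroup.normalizer (Q : Set G) →
      IsPGroup p (Q ⊔ K : Subgroup G) ∧ g ∈ Subgroup.normalizer ((Q ⊔ K : Subgroup G) : Set G) ∧
        P < Q ⊔ K ∧ Q ⊔ K ≤ V) ∧
    (∀ Q : Subgroup G, IsPGroup p Q → P < Q → Q ≤ V → g ∈ Subgroup.normalizer (Q : Set G) →
      Q ≤ Q ⊔ K ∧ P ⊔ K ≤ Q ⊔ K) :=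
  stmt4_general p V P K hP hPV g hgV hgP hKV hKnormal hK hKP
end
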